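/- Let f : ℝⁿ → ℝ be differentiable and L-smooth with L > 0, let g(x) = Σ_{i=1}^n g_i(x_i), set F := f + g, let x* be a global minimizer of F, ξ(x) := F(x) − F(x*) with ξ(x⁰) > 0, and define λ(x) := −L·inf_{y ∈ ℝⁿ} { ⟨∇f(x), y⟩ + (L/2)‖y‖² + g(x+y) − g(x) }. Let x^{k+1} := x^k + (u^k)_{[S_k]}, where S_k ⊆ {1,…,n} is nonempty and u^k ∈ ℝⁿ, and suppose there is c > 0 such that for every k < K one has −U_{S_k}(x^k, u^k) ≥ c·λ(x^k). Fix ε > 0 and assume (ξ(x⁰)/ε)·log(ξ(x⁰)/ε) ≤ c·K. Then at least one of the following holds: (i) λ(x^k) < ε for at least one k ∈ {0, …, K−1}, or (ii) ξ(x^K) ≤ ε. -/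

import Mathlib

open scoped RealInnerProductSpace BigOperators

/-- The quantity `λ(x) = -L · inf_y { ⟨∇f(x),y⟩ + (L/2)‖y‖² + g(x+y) - g(x) }`. -/
noncomputable def lamFun {n : ℕ} (f g : EuclideanSpace ℝ (Fin n) → ℝ) (L : ℝ)
    (x : EuclideanSpace ℝ (Fin n)) : ℝ :=
  -L * sInf (Set.range fun y : EuclideanSpace ℝ (Fin n) =>
    ⟪gradient f x, y⟫ + L / 2 * ‖y‖ ^ 2 + g (x + y) - g x)

/-- The masked vector `u_{[S]}`. -/
noncomputable def maskVec {n : ℕ} (S : Finset (Fin n)) (u : EuclideanSpace ℝ (Fin n)) :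
    EuclideanSpace ℝ (Fin n) :=
  (EuclideanSpace.equiv (Fin n) ℝ).symm fun i => if i ∈ S then u i else 0

/-- The block upper bound `U_S(x, u)` with `M = L·I`. -/
noncomputable def USFun {n : ℕ} (f : EuclideanSpace ℝ (Fin n) → ℝ) (gi : Fin n → ℝ → ℝ)
    (L : ℝ) (S : Finset (Fin n)) (x u : EuclideanSpace ℝ (Fin n)) : ℝ :=
  (∑ i ∈ S, gradient f x i * u i) + L / 2 * (∑ i ∈ S, u i ^ 2) +
    ∑ i ∈ S, (gi i (x i + u i) - gi i (x i))


/-!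
Each step decreases `F = f + g` by at least `-U_{S_k}(x^k, u^k)`: the inner product and squared
norm of the masked step only see the coordinates in `S_k`, and so does the separable `g`, so the
L-smoothness bound at `x^k` in direction `(u^k)_{[S_k]}` is exactly `F(x^{k+1}) ≤ F(x^k) + U_{S_k}`.
While `λ(x^k) ≥ ε`, the proportion bound turns this into a decrease of at least `c ε` per step,
so `ξ(x^K) ≤ ξ(x^0) - c K ε`, and `t - 1 ≤ t log t` with `t = ξ(x^0)/ε` makes the right side `≤ ε`.
-/

open Finset

section Masking

variable {n : ℕ}

@[simp]
lemma maskVec_apply (S : Finset (Fin n)) (u : EuclideanSpace ℝ (Fin n)) (i : Fin n) :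
    maskVec S u i = if i ∈ S then u i else 0 :=
  rfl

lemma inner_maskVec (S : Finset (Fin n)) (u v : EuclideanSpace ℝ (Fin n)) :
    ⟪v, maskVec S u⟫ = ∑ i ∈ S, v i * u i := by
  simp [PiLp.inner_apply, ite_mul, sum_ite_mem, mul_comm]

lemma norm_maskVec_sq (S : Finset (Fin n)) (u : EuclideanSpace ℝ (Fin n)) :
    ‖maskVec S u‖ ^ 2 = ∑ i ∈ S, u i ^ 2 := by
  simp [EuclideanSpace.norm_sq_eq, ite_pow, sum_ite_mem]

lemma sum_add_maskVec_sub_sum (gi : Fin n → ℝ → ℝ) (S : Finset (Fin n))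
    (x u : EuclideanSpace ℝ (Fin n)) :
    ∑ i, gi i ((x + maskVec S u) i) - ∑ i, gi i (x i) =
      ∑ i ∈ S, (gi i (x i + u i) - gi i (x i)) := by
  rw [← sum_sub_distrib]
  calc _ = ∑ i, if i ∈ S then gi i (x i + u i) - gi i (x i) else 0 :=
        sum_congr rfl fun i _ => by by_cases hi : i ∈ S <;> simp [hi]
    _ = _ := by rw [sum_ite_mem, univ_inter]

lemma add_add_maskVec_le_add_USFun {f g : EuclideanSpace ℝ (Fin n) → ℝ} {gi : Fin n → ℝ → ℝ} {L : ℝ}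
    (hsmooth : ∀ x h : EuclideanSpace ℝ (Fin n),
      f (x + h) ≤ f x + ⟪gradient f x, h⟫ + L / 2 * ‖h‖ ^ 2)
    (hg : ∀ x : EuclideanSpace ℝ (Fin n), g x = ∑ i, gi i (x i))
    (S : Finset (Fin n)) (x u : EuclideanSpace ℝ (Fin n)) :
    f (x + maskVec S u) + g (x + maskVec S u) ≤ f x + g x + USFun f gi L S x u := by
  have hgstep := sum_add_maskVec_sub_sum gi S x u
  rw [← hg, ← hg] at hgstep
  have hf := hsmooth x (maskVec S u)
  rw [inner_maskVec, norm_maskVec_sq] at hf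
  rw [USFun]
  linarith

end Masking

lemma le_sub_mul_of_forall_lt_le_sub {a : ℕ → ℝ} {d : ℝ} {K : ℕ}
    (h : ∀ k < K, a (k + 1) ≤ a k - d) : a K ≤ a 0 - K * d := by
  induction K with
  | zero => simp
  | succ K ih =>
    have hlast := h K K.lt_succ_self
    have hprev := ih fun k hk => h k (hk.trans K.lt_succ_self)
    push_cast
    linarith

lemma sub_mul_le_of_div_mul_log_div_le {a b ε : ℝ} (hε : 0 < ε) (hb : 0 ≤ b)
    (h : a / ε * Real.log (a / ε) ≤ b) : a - b * ε ≤ ε := by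
  rcases le_or_gt a 0 with ha | ha
  · linarith [mul_nonneg hb hε.le]
  have key : a / ε - 1 ≤ b := (Real.self_sub_one_le_mul_log (div_pos ha hε).le).trans h
  rw [div_sub_one hε.ne', div_le_iff₀ hε] at key
  linarith

theorem general_nonconvex_block_descent_general {n : ℕ} (f g : EuclideanSpace ℝ (Fin n) → ℝ)
    (gi : Fin n → ℝ → ℝ) (L c : ℝ) (hc : 0 < c)
    (hsmooth : ∀ x h : EuclideanSpace ℝ (Fin n),
      f (x + h) ≤ f x + ⟪gradient f x, h⟫ + L / 2 * ‖h‖ ^ 2)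
    (hg : ∀ x : EuclideanSpace ℝ (Fin n), g x = ∑ i, gi i (x i))
    (xstar : EuclideanSpace ℝ (Fin n))
    (X : ℕ → EuclideanSpace ℝ (Fin n)) (S : ℕ → Finset (Fin n))
    (u : ℕ → EuclideanSpace ℝ (Fin n))
    (hiter : ∀ k : ℕ, X (k + 1) = X k + maskVec (S k) (u k))
    (K : ℕ)
    (hprog : ∀ k < K, c * lamFun f g L (X k) ≤ -USFun f gi L (S k) (X k) (u k))
    (ε : ℝ) (hε : 0 < ε)
    (hK : (f (X 0) + g (X 0) - (f xstar + g xstar)) / ε *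
        Real.log ((f (X 0) + g (X 0) - (f xstar + g xstar)) / ε) ≤ c * K) :
    (∃ k < K, lamFun f g L (X k) < ε) ∨
      f (X K) + g (X K) - (f xstar + g xstar) ≤ ε := by
  refine or_iff_not_imp_left.2 fun hlam => ?_
  push Not at hlam
  have hstep : ∀ k < K, f (X (k + 1)) + g (X (k + 1)) ≤ f (X k) + g (X k) - c * ε := by
    intro k hk
    have hdesc := add_add_maskVec_le_add_USFun hsmooth hg (S k) (X k) (u k)
    rw [← hiter] at hdesc
    linarith [hprog k hk, mul_le_mul_of_nonneg_left (hlam k hk) hc.le]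
  have htotal := le_sub_mul_of_forall_lt_le_sub (a := fun k => f (X k) + g (X k)) hstep
  have hfinal := sub_mul_le_of_div_mul_log_div_le hε (by positivity) hK
  linarith

theorem general_nonconvex_block_descent {n : ℕ} (f g : EuclideanSpace ℝ (Fin n) → ℝ)
    (gi : Fin n → ℝ → ℝ) (L c : ℝ) (hL : 0 < L) (hc : 0 < c)
    (hdiff : Differentiable ℝ f)
    (hsmooth : ∀ x h : EuclideanSpace ℝ (Fin n),
      f (x + h) ≤ f x + ⟪gradient f x, h⟫ + L / 2 * ‖h‖ ^ 2)
    (hg : ∀ x : EuclideanSpace ℝ (Fin n), g x = ∑ i, gi i (x i))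
    (xstar : EuclideanSpace ℝ (Fin n)) (hmin : ∀ y, f xstar + g xstar ≤ f y + g y)
    (X : ℕ → EuclideanSpace ℝ (Fin n)) (S : ℕ → Finset (Fin n))
    (u : ℕ → EuclideanSpace ℝ (Fin n))
    (hξ0 : 0 < f (X 0) + g (X 0) - (f xstar + g xstar))
    (hSne : ∀ k, (S k).Nonempty)
    (hiter : ∀ k : ℕ, X (k + 1) = X k + maskVec (S k) (u k))
    (K : ℕ)
    (hprog : ∀ k < K, c * lamFun f g L (X k) ≤ -USFun f gi L (S k) (X k) (u k))
    (ε : ℝ) (hε : 0 < ε)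
    (hK : (f (X 0) + g (X 0) - (f xstar + g xstar)) / ε *
        Real.log ((f (X 0) + g (X 0) - (f xstar + g xstar)) / ε) ≤ c * K) :
    (∃ k < K, lamFun f g L (X k) < ε) ∨
      f (X K) + g (X K) - (f xstar + g xstar) ≤ ε :=
  general_nonconvex_block_descent_general f g gi L c hc hsmooth hg xstar X S u hiter K hprog ε hε hK
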